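/- Let D be a noncommutative subset of V_nc satisfying unitary invariance and the converse direct-sum property. Then for any n, m, k ∈ ℕ, a ∈ D_n, c ∈ D_m, b ∈ V^{n×m}, and any complex matrix Z ∈ ℂ^{k×k}: δ_D(I_k ⊗ a, I_k ⊗ c)(Z ⊗ b) = δ_D(a,c)(b) · ‖Z Z*‖^{1/2}, where ‖Z Z*‖^{1/2} is the largest singular value of Z. -/

import Mathlib

open Matrix
open scoped ENNReal

variable {V : Type*} [AddCommGroup V] [Module ℂ V]

/-- The block upper-triangular matrix [[a, b],[0, c]], reindexed to size `n + m`. -/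
def blkV {n m : ℕ} (a : Matrix (Fin n) (Fin n) V) (b : Matrix (Fin n) (Fin m) V)
    (c : Matrix (Fin m) (Fin m) V) : Matrix (Fin (n + m)) (Fin (n + m)) V :=
  Matrix.reindex finSumFinEquiv finSumFinEquiv (Matrix.fromBlocks a b 0 c)

/-- The pseudometric `δ_D(a,c)(b) = [sup{t : [[a, s b],[0, c]] ∈ D_{n+m} ∀ s ∈ [0,t]}]⁻¹`,
valued in `[0, ∞]` (with the conventions `1/0 = ∞`, `1/∞ = 0`). -/
noncomputable def ncDelta (D : ∀ n, Set (Matrix (Fin n) (Fin n) V)) {n m : ℕ}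
    (a : Matrix (Fin n) (Fin n) V) (c : Matrix (Fin m) (Fin m) V)
    (b : Matrix (Fin n) (Fin m) V) : ℝ≥0∞ :=
  (sSup {t : ℝ≥0∞ | ∀ s : ℝ, 0 ≤ s → ENNReal.ofReal s ≤ t →
      blkV a ((s : ℂ) • b) c ∈ D (n + m)})⁻¹

/-- `δ̃_D(a,c) = δ_D(a,c)(a-c)`. -/
noncomputable def ncDeltaT (D : ∀ n, Set (Matrix (Fin n) (Fin n) V)) {n : ℕ}
    (a c : Matrix (Fin n) (Fin n) V) : ℝ≥0∞ :=
  ncDelta D a c (a - c)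

/-- Left multiplication of a matrix over `V` by a scalar (complex) matrix. -/
def scalarMulL {n m l : ℕ} (S : Matrix (Fin n) (Fin m) ℂ)
    (a : Matrix (Fin m) (Fin l) V) : Matrix (Fin n) (Fin l) V :=
  Matrix.of fun i j => ∑ r, S i r • a r j

/-- Right multiplication of a matrix over `V` by a scalar (complex) matrix. -/
def scalarMulR {n m l : ℕ} (a : Matrix (Fin n) (Fin m) V)
    (T : Matrix (Fin m) (Fin l) ℂ) : Matrix (Fin n) (Fin l) V :=
  Matrix.of fun i j => ∑ r, T r j • a i r

/-- `D` respects direct sums: `a ∈ D_n, c ∈ D_m ⟹ diag(a,c) ∈ D_{n+m}`. -/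
def RespectsDirectSums (D : ∀ n, Set (Matrix (Fin n) (Fin n) V)) : Prop :=
  ∀ ⦃n m : ℕ⦄ (a : Matrix (Fin n) (Fin n) V) (c : Matrix (Fin m) (Fin m) V),
    a ∈ D n → c ∈ D m → blkV a 0 c ∈ D (n + m)

/-- `D` is invariant under conjugation by scalar unitary matrices. -/
def UnitaryInvariant (D : ∀ n, Set (Matrix (Fin n) (Fin n) V)) : Prop :=
  ∀ ⦃n : ℕ⦄ (U : Matrix (Fin n) (Fin n) ℂ), U ∈ Matrix.unitaryGroup (Fin n) ℂ →
    ∀ a ∈ D n, scalarMulL U (scalarMulR a Uᴴ) ∈ D n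

/-- Converse direct-sum property: `diag(a,c) ∈ D_{n+m} ⟹ a ∈ D_n ∧ c ∈ D_m`. -/
def ConverseDirectSums (D : ∀ n, Set (Matrix (Fin n) (Fin n) V)) : Prop :=
  ∀ ⦃n m : ℕ⦄ (a : Matrix (Fin n) (Fin n) V) (c : Matrix (Fin m) (Fin m) V),
    blkV a 0 c ∈ D (n + m) → a ∈ D n ∧ c ∈ D m

/-- Kronecker product of a scalar `k×k` matrix with a matrix over `V`,
reindexed to size `k·n × k·m`. -/
def kronV {k n m : ℕ} (Z : Matrix (Fin k) (Fin k) ℂ) (b : Matrix (Fin n) (Fin m) V) :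
    Matrix (Fin (k * n)) (Fin (k * m)) V :=
  Matrix.reindex finProdFinEquiv finProdFinEquiv
    (Matrix.of fun (i : Fin k × Fin n) (j : Fin k × Fin m) => Z i.1 j.1 • b i.2 j.2)

/-!
Write `Z = U Σ W*` with `U, W` unitary and `Σ = diag(σ₁, …, σ_k)`, `σ_p ≥ 0`. Conjugating by the
scalar unitary `diag(U* ⊗ I_n, W* ⊗ I_m)` fixes `I_k ⊗ a` and `I_k ⊗ c` and turns `s Z ⊗ b` into
`s Σ ⊗ b`; after a permutation of coordinates, `[[I_k ⊗ a, s Σ ⊗ b], [0, I_k ⊗ c]]` is the direct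
sum of the `[[a, s σ_p b], [0, c]]`. By the direct-sum property and its converse it lies in `D`
iff every summand does, so the admissible `s` for `Z ⊗ b` are those with `s · max σ_p` admissible
for `b`. Finally `max σ_p = ‖Z‖ = ‖Z Z*‖^{1/2}` by the C*-identity.
-/

lemma Matrix.permMatrix_mem_unitaryGroup {R n : Type*} [CommRing R] [StarRing R] [Fintype n]
    [DecidableEq n] (σ : Equiv.Perm n) : σ.permMatrix R ∈ Matrix.unitaryGroup n R := by
  rw [Matrix.mem_unitaryGroup_iff, Matrix.star_eq_conjTranspose, Matrix.conjTranspose_permMatrix,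
    ← Matrix.permMatrix_mul, inv_mul_cancel, Matrix.permMatrix_one]

def prodFinSuccEquiv (m : Type*) (k : ℕ) : (m ⊕ m × Fin k) ≃ m × Fin (k + 1) where
  toFun := Sum.elim (fun x => (x, 0)) (fun xp => (xp.1, xp.2.succ))
  invFun v := Fin.cases (Sum.inl v.1) (fun p => Sum.inr (v.1, p)) v.2
  left_inv := by rintro (x | ⟨x, p⟩) <;> simp
  right_inv := by
    rintro ⟨y, q⟩
    refine Fin.cases ?_ ?_ q <;> simp

lemma Matrix.reindex_blockDiagonal_fin_succ {m n α : Type*} [Zero α] {k : ℕ}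
    (f : Fin (k + 1) → Matrix m n α) :
    Matrix.reindex (prodFinSuccEquiv m k).symm (prodFinSuccEquiv n k).symm
        (Matrix.blockDiagonal f) =
      Matrix.fromBlocks (f 0) 0 0 (Matrix.blockDiagonal fun p => f p.succ) := by
  ext (x | ⟨x, p⟩) (y | ⟨y, q⟩) <;>
    simp [prodFinSuccEquiv, Matrix.blockDiagonal_apply, Fin.succ_ne_zero,
      (Fin.succ_ne_zero _).symm]

open scoped InnerProductSpace in
/-- The columns of `B` are orthogonal; normalizing the nonzero ones and completing them to an
orthonormal basis gives the columns of `U`. -/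
lemma Matrix.exists_unitary_mul_diagonal_sqrt {n : Type*} [Fintype n] [DecidableEq n]
    (B : Matrix n n ℂ) {d : n → ℝ} (hB : Bᴴ * B = Matrix.diagonal fun p => (d p : ℂ)) :
    ∃ U ∈ Matrix.unitaryGroup n ℂ, B = U * Matrix.diagonal fun p => (√(d p) : ℂ) := by
  let col (p : n) : EuclideanSpace ℂ n := WithLp.toLp 2 fun j => B j p
  have hinner : ∀ p q, ⟪col p, col q⟫_ℂ = (Matrix.diagonal fun p => (d p : ℂ)) p q := by
    intro p q
    rw [← hB, Matrix.mul_apply, PiLp.inner_apply]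
    simp [col, mul_comm]
  have hnorm : ∀ p, ‖col p‖ = √(d p) := by
    intro p
    have h := hinner p p
    rw [inner_self_eq_norm_sq_to_K, Matrix.diagonal_apply_eq] at h
    have h2 : ‖col p‖ ^ 2 = d p := Complex.ofReal_injective (by simpa using h)
    rw [← h2, Real.sqrt_sq (norm_nonneg _)]
  have horth : ∀ p q, p ≠ q → ⟪col p, col q⟫_ℂ = 0 := fun p q hpq => by
    rw [hinner, Matrix.diagonal_apply_ne _ hpq]
  let v (p : n) : EuclideanSpace ℂ n := (‖col p‖⁻¹ : ℂ) • col p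
  have hv : Orthonormal ℂ ({p | col p ≠ 0}.domRestrict v) := by
    refine ⟨fun ⟨p, hp⟩ => norm_smul_inv_norm hp, fun ⟨p, _⟩ ⟨q, _⟩ hpq => ?_⟩
    simp [v, inner_smul_left, inner_smul_right, horth p q (fun h => hpq (Subtype.ext h))]
  obtain ⟨u, hu⟩ := hv.exists_orthonormalBasis_extension_of_card_eq (by simp)
  refine ⟨(EuclideanSpace.basisFun n ℂ).toBasis.toMatrix u,
    OrthonormalBasis.toMatrix_orthonormalBasis_mem_unitary _ _, ?_⟩
  ext j p
  simp only [Matrix.mul_diagonal, Module.Basis.toMatrix_apply,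
    OrthonormalBasis.coe_toBasis_repr_apply, EuclideanSpace.basisFun_repr, ← hnorm]
  by_cases hp : col p = 0
  · simp [show B j p = 0 from congrArg (fun x : EuclideanSpace ℂ n => x j) hp, hp]
  · rw [hu p hp]
    have : (‖col p‖ : ℂ) ≠ 0 := by simpa using hp
    simp [v, col, field]

lemma Matrix.exists_svd {n : Type*} [Fintype n] [DecidableEq n] (Z : Matrix n n ℂ) :
    ∃ U ∈ Matrix.unitaryGroup n ℂ, ∃ W ∈ Matrix.unitaryGroup n ℂ, ∃ σ : n → ℝ,
      (∀ p, 0 ≤ σ p) ∧ Z = U * Matrix.diagonal (fun p => (σ p : ℂ)) * Wᴴ := by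
  have hH : (Zᴴ * Z).IsHermitian := Matrix.isHermitian_conjTranspose_mul_self Z
  set W : Matrix n n ℂ := (hH.eigenvectorUnitary : Matrix n n ℂ)
  have hW : W ∈ Matrix.unitaryGroup n ℂ := hH.eigenvectorUnitary.2
  have hZW : (Z * W)ᴴ * (Z * W) = Matrix.diagonal fun p => (hH.eigenvalues p : ℂ) := by
    have h := hH.conjStarAlgAut_star_eigenvectorUnitary
    rw [Unitary.conjStarAlgAut_star_apply] at h
    rw [Matrix.conjTranspose_mul, ← Matrix.star_eq_conjTranspose]
    simpa [Matrix.mul_assoc, W, Function.comp_def] using h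
  obtain ⟨U, hU, hU'⟩ := Matrix.exists_unitary_mul_diagonal_sqrt (Z * W) hZW
  refine ⟨U, hU, W, hW, fun p => √(hH.eigenvalues p), fun p => Real.sqrt_nonneg _, ?_⟩
  rw [← hU', Matrix.mul_assoc, ← Matrix.star_eq_conjTranspose, Matrix.mem_unitaryGroup_iff.mp hW,
    Matrix.mul_one]

section OperatorNorm

open scoped Matrix.Norms.L2Operator

variable {𝕜 : Type*} [RCLike 𝕜] {n : Type*} [Fintype n] [DecidableEq n]

lemma Matrix.sqrt_norm_toEuclideanCLM_mul_conjTranspose (Z : Matrix n n 𝕜) :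
    √‖Matrix.toEuclideanCLM (𝕜 := 𝕜) (Z * Zᴴ)‖ = ‖Z‖ := by
  rw [← Matrix.cstar_norm_def, ← Matrix.star_eq_conjTranspose, CStarRing.norm_self_mul_star,
    Real.sqrt_mul_self (norm_nonneg _)]

lemma Matrix.l2_opNorm_unitary_mul_diagonal_mul {U W : Matrix n n 𝕜}
    (hU : U ∈ Matrix.unitaryGroup n 𝕜) (hW : W ∈ Matrix.unitaryGroup n 𝕜) (d : n → 𝕜) :
    ‖U * Matrix.diagonal d * Wᴴ‖ = ‖d‖ := by
  rw [← Matrix.star_eq_conjTranspose, Matrix.mul_assoc, CStarRing.norm_coe_unitary_mul ⟨U, hU⟩,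
    CStarRing.norm_mul_coe_unitary _ ⟨star W, Unitary.star_mem hW⟩, Matrix.l2_opNorm_diagonal]

end OperatorNorm

lemma ENNReal.sSup_setOf_mul_mem {S : Set ℝ≥0∞} {c : ℝ≥0∞} (hc₀ : c ≠ 0) (hc : c ≠ ⊤) :
    sSup {t | t * c ∈ S} = sSup S / c := by
  apply le_antisymm
  · refine sSup_le fun t ht => ?_
    rw [ENNReal.le_div_iff_mul_le (Or.inl hc₀) (Or.inl hc)]
    exact le_sSup ht
  · rw [ENNReal.sSup_div]
    refine iSup₂_le fun t ht => le_sSup ?_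
    rwa [Set.mem_ofPred_eq, ENNReal.div_mul_cancel hc₀ hc]

section ScalarAction

variable {n m p l : ℕ}

lemma scalarMulL_one (A : Matrix (Fin n) (Fin l) V) : scalarMulL 1 A = A := by
  ext i j
  simp [scalarMulL, Matrix.one_apply, ite_smul]

lemma scalarMulR_one (A : Matrix (Fin n) (Fin l) V) : scalarMulR A 1 = A := by
  ext i j
  simp [scalarMulR, Matrix.one_apply, ite_smul]

lemma scalarMulL_zero (S : Matrix (Fin n) (Fin m) ℂ) :
    scalarMulL S (0 : Matrix (Fin m) (Fin l) V) = 0 := by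
  ext i j
  simp [scalarMulL]

lemma scalarMulL_mul (S : Matrix (Fin n) (Fin m) ℂ) (T : Matrix (Fin m) (Fin p) ℂ)
    (A : Matrix (Fin p) (Fin l) V) :
    scalarMulL (S * T) A = scalarMulL S (scalarMulL T A) := by
  ext i j
  simp only [scalarMulL, Matrix.of_apply, Matrix.mul_apply, Finset.sum_smul, Finset.smul_sum,
    smul_smul]
  rw [Finset.sum_comm]

lemma scalarMulR_mul (A : Matrix (Fin n) (Fin l) V) (S : Matrix (Fin l) (Fin m) ℂ)
    (T : Matrix (Fin m) (Fin p) ℂ) :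
    scalarMulR A (S * T) = scalarMulR (scalarMulR A S) T := by
  ext i j
  simp only [scalarMulR, Matrix.of_apply, Matrix.mul_apply, Finset.sum_smul, Finset.smul_sum,
    smul_smul, mul_comm]
  rw [Finset.sum_comm]

lemma scalarMulL_scalarMulR (S : Matrix (Fin n) (Fin m) ℂ) (A : Matrix (Fin m) (Fin l) V)
    (T : Matrix (Fin l) (Fin p) ℂ) :
    scalarMulL S (scalarMulR A T) = scalarMulR (scalarMulL S A) T := by
  ext i j
  simp only [scalarMulL, scalarMulR, Matrix.of_apply, Finset.smul_sum, smul_smul, mul_comm]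
  rw [Finset.sum_comm]

lemma scalarMulL_eq_mul (S : Matrix (Fin n) (Fin m) ℂ) (A : Matrix (Fin m) (Fin l) ℂ) :
    scalarMulL S A = S * A := by
  ext i j
  simp [scalarMulL, Matrix.mul_apply]

lemma scalarMulL_permMatrix (σ : Equiv.Perm (Fin n)) (A : Matrix (Fin n) (Fin l) V) :
    scalarMulL (σ.permMatrix ℂ) A = A.submatrix σ id := by
  ext i j
  simp [scalarMulL, PEquiv.toMatrix_apply, ite_smul]

lemma scalarMulR_permMatrix (A : Matrix (Fin l) (Fin n) V) (σ : Equiv.Perm (Fin n)) :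
    scalarMulR A (σ.permMatrix ℂ) = A.submatrix id σ.symm := by
  ext i j
  simp [scalarMulR, PEquiv.toMatrix_apply, ite_smul, ← Equiv.eq_symm_apply]

end ScalarAction

section Invariance

variable {D : ∀ n, Set (Matrix (Fin n) (Fin n) V)}

lemma UnitaryInvariant.conj_mem_iff (huni : UnitaryInvariant D) {n : ℕ}
    {U : Matrix (Fin n) (Fin n) ℂ} (hU : U ∈ Matrix.unitaryGroup (Fin n) ℂ)
    (M : Matrix (Fin n) (Fin n) V) :
    scalarMulL U (scalarMulR M Uᴴ) ∈ D n ↔ M ∈ D n := by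
  refine ⟨fun h => ?_, huni U hU M⟩
  have hUU : Uᴴ * U = 1 := Matrix.mem_unitaryGroup_iff'.mp hU
  simpa [Matrix.conjTranspose_conjTranspose, ← scalarMulL_scalarMulR, ← scalarMulR_mul,
    ← scalarMulL_mul, hUU, scalarMulR_one, scalarMulL_one] using
    huni Uᴴ (Unitary.star_mem hU) _ h

lemma UnitaryInvariant.submatrix_mem_iff (huni : UnitaryInvariant D) {n : ℕ}
    (σ : Equiv.Perm (Fin n)) (M : Matrix (Fin n) (Fin n) V) :
    M.submatrix σ σ ∈ D n ↔ M ∈ D n := by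
  have h := huni.conj_mem_iff (Matrix.permMatrix_mem_unitaryGroup σ) M
  rwa [Matrix.conjTranspose_permMatrix, scalarMulR_permMatrix, scalarMulL_permMatrix,
    Matrix.submatrix_submatrix, Equiv.Perm.inv_def, Equiv.symm_symm] at h

lemma UnitaryInvariant.reindex_mem_iff (huni : UnitaryInvariant D) {p q : ℕ} {ι : Type*}
    (e : ι ≃ Fin p) (e' : ι ≃ Fin q) (M : Matrix ι ι V) :
    Matrix.reindex e e M ∈ D p ↔ Matrix.reindex e' e' M ∈ D q := by
  obtain rfl : p = q := by simpa using Fintype.card_congr (e.symm.trans e')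
  rw [← huni.submatrix_mem_iff (e'.symm.trans e)]
  congr!
  ext i j
  simp

end Invariance

section Kronecker

variable {k n m : ℕ}

lemma smul_kronV (s : ℂ) (Z : Matrix (Fin k) (Fin k) ℂ) (b : Matrix (Fin n) (Fin m) V) :
    s • kronV Z b = kronV (s • Z) b := by
  ext i j
  simp [kronV, smul_smul]

lemma kronV_apply (Z : Matrix (Fin k) (Fin k) ℂ) (b : Matrix (Fin n) (Fin m) V)
    (p q : Fin k) (x : Fin n) (y : Fin m) :
    kronV Z b (finProdFinEquiv (p, x)) (finProdFinEquiv (q, y)) = Z p q • b x y := by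
  simp [kronV]

lemma scalarMulL_kronV (P X : Matrix (Fin k) (Fin k) ℂ) (b : Matrix (Fin n) (Fin m) V) :
    scalarMulL (kronV P (1 : Matrix (Fin n) (Fin n) ℂ)) (kronV X b) = kronV (P * X) b := by
  ext i j
  obtain ⟨⟨p, x⟩, rfl⟩ := finProdFinEquiv.surjective i
  obtain ⟨⟨q, y⟩, rfl⟩ := finProdFinEquiv.surjective j
  simp only [scalarMulL, Matrix.of_apply]
  rw [← Equiv.sum_comp finProdFinEquiv, Fintype.sum_prod_type]
  simp [kronV_apply, Matrix.mul_apply, Matrix.one_apply, smul_smul, ite_smul, Finset.sum_smul]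

lemma scalarMulR_kronV (X Q : Matrix (Fin k) (Fin k) ℂ) (b : Matrix (Fin n) (Fin m) V) :
    scalarMulR (kronV X b) (kronV Q (1 : Matrix (Fin m) (Fin m) ℂ)) = kronV (X * Q) b := by
  ext i j
  obtain ⟨⟨p, x⟩, rfl⟩ := finProdFinEquiv.surjective i
  obtain ⟨⟨q, y⟩, rfl⟩ := finProdFinEquiv.surjective j
  simp only [scalarMulR, Matrix.of_apply]
  rw [← Equiv.sum_comp finProdFinEquiv, Fintype.sum_prod_type]
  simp [kronV_apply, Matrix.mul_apply, Matrix.one_apply, smul_smul, ite_smul, Finset.sum_smul,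
    mul_comm]

lemma kronV_one_one :
    kronV (1 : Matrix (Fin k) (Fin k) ℂ) (1 : Matrix (Fin n) (Fin n) ℂ) = 1 := by
  ext i j
  obtain ⟨⟨p, x⟩, rfl⟩ := finProdFinEquiv.surjective i
  obtain ⟨⟨q, y⟩, rfl⟩ := finProdFinEquiv.surjective j
  simp only [kronV_apply, Matrix.one_apply, EmbeddingLike.apply_eq_iff_eq, Prod.mk.injEq,
    smul_eq_mul, mul_ite, mul_one, mul_zero, ite_and]
  split_ifs <;> simp_all

lemma kronV_conjTranspose (P : Matrix (Fin k) (Fin k) ℂ) (B : Matrix (Fin n) (Fin n) ℂ) :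
    (kronV P B)ᴴ = kronV Pᴴ Bᴴ := by
  ext i j
  obtain ⟨⟨p, x⟩, rfl⟩ := finProdFinEquiv.surjective i
  obtain ⟨⟨q, y⟩, rfl⟩ := finProdFinEquiv.surjective j
  simp [kronV_apply, Matrix.conjTranspose_apply]

lemma kronV_one_mem_unitaryGroup {P : Matrix (Fin k) (Fin k) ℂ}
    (hP : P ∈ Matrix.unitaryGroup (Fin k) ℂ) :
    kronV P (1 : Matrix (Fin n) (Fin n) ℂ) ∈ Matrix.unitaryGroup (Fin (k * n)) ℂ := by
  rw [Matrix.mem_unitaryGroup_iff] at hP ⊢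
  rw [Matrix.star_eq_conjTranspose, kronV_conjTranspose, Matrix.conjTranspose_one,
    ← scalarMulL_eq_mul, scalarMulL_kronV, ← Matrix.star_eq_conjTranspose, hP, kronV_one_one]

end Kronecker

section BlockTriangular

variable {n m : ℕ}

omit [Module ℂ V] in
lemma blkV_apply (A : Matrix (Fin n) (Fin n) V) (B : Matrix (Fin n) (Fin m) V)
    (C : Matrix (Fin m) (Fin m) V) (u v : Fin n ⊕ Fin m) :
    blkV A B C (finSumFinEquiv u) (finSumFinEquiv v) = Matrix.fromBlocks A B 0 C u v := by
  simp [blkV]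

lemma scalarMulL_blkV (P : Matrix (Fin n) (Fin n) ℂ) (Q : Matrix (Fin m) (Fin m) ℂ)
    (A : Matrix (Fin n) (Fin n) V) (B : Matrix (Fin n) (Fin m) V) (C : Matrix (Fin m) (Fin m) V) :
    scalarMulL (blkV P 0 Q) (blkV A B C)
      = blkV (scalarMulL P A) (scalarMulL P B) (scalarMulL Q C) := by
  ext i j
  obtain ⟨u, rfl⟩ := finSumFinEquiv.surjective i
  obtain ⟨v, rfl⟩ := finSumFinEquiv.surjective j
  simp only [scalarMulL, Matrix.of_apply, blkV_apply]
  rw [← Equiv.sum_comp finSumFinEquiv, Fintype.sum_sum_type]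
  simp only [blkV_apply]
  rcases u with u | u <;> rcases v with v | v <;> simp [Matrix.fromBlocks]

lemma scalarMulR_blkV (P : Matrix (Fin n) (Fin n) ℂ) (Q : Matrix (Fin m) (Fin m) ℂ)
    (A : Matrix (Fin n) (Fin n) V) (B : Matrix (Fin n) (Fin m) V) (C : Matrix (Fin m) (Fin m) V) :
    scalarMulR (blkV A B C) (blkV P 0 Q)
      = blkV (scalarMulR A P) (scalarMulR B Q) (scalarMulR C Q) := by
  ext i j
  obtain ⟨u, rfl⟩ := finSumFinEquiv.surjective i
  obtain ⟨v, rfl⟩ := finSumFinEquiv.surjective j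
  simp only [scalarMulR, Matrix.of_apply, blkV_apply]
  rw [← Equiv.sum_comp finSumFinEquiv, Fintype.sum_sum_type]
  simp only [blkV_apply]
  rcases u with u | u <;> rcases v with v | v <;> simp [Matrix.fromBlocks]

lemma blkV_conjTranspose (P : Matrix (Fin n) (Fin n) ℂ) (Q : Matrix (Fin m) (Fin m) ℂ) :
    (blkV P 0 Q)ᴴ = blkV Pᴴ 0 Qᴴ := by
  simp [blkV, Matrix.fromBlocks_conjTranspose]

lemma blkV_one_zero_one :
    blkV (1 : Matrix (Fin n) (Fin n) ℂ) 0 (1 : Matrix (Fin m) (Fin m) ℂ) = 1 := by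
  simp [blkV, Matrix.fromBlocks_one]

lemma blkV_mem_unitaryGroup {P : Matrix (Fin n) (Fin n) ℂ} {Q : Matrix (Fin m) (Fin m) ℂ}
    (hP : P ∈ Matrix.unitaryGroup (Fin n) ℂ) (hQ : Q ∈ Matrix.unitaryGroup (Fin m) ℂ) :
    blkV P 0 Q ∈ Matrix.unitaryGroup (Fin (n + m)) ℂ := by
  rw [Matrix.mem_unitaryGroup_iff, Matrix.star_eq_conjTranspose] at hP hQ ⊢
  rw [blkV_conjTranspose, ← scalarMulL_eq_mul, scalarMulL_blkV, scalarMulL_zero,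
    scalarMulL_eq_mul P, scalarMulL_eq_mul Q, hP, hQ, blkV_one_zero_one]

end BlockTriangular

def blkDiagV {k r : ℕ} (f : Fin k → Matrix (Fin r) (Fin r) V) :
    Matrix (Fin (k * r)) (Fin (k * r)) V :=
  Matrix.reindex ((Equiv.prodComm _ _).trans finProdFinEquiv)
    ((Equiv.prodComm _ _).trans finProdFinEquiv) (Matrix.blockDiagonal f)

omit [Module ℂ V] in
lemma blkDiagV_apply {k r : ℕ} (f : Fin k → Matrix (Fin r) (Fin r) V) (p q : Fin k)
    (x y : Fin r) :
    blkDiagV f (finProdFinEquiv (p, x)) (finProdFinEquiv (q, y)) =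
      if p = q then f p x y else 0 := by
  simp [blkDiagV, Matrix.blockDiagonal_apply]

section DirectSums

variable {D : ∀ n, Set (Matrix (Fin n) (Fin n) V)}

lemma mem_zero_of_mem (huni : UnitaryInvariant D) (hconv : ConverseDirectSums D) {p : ℕ}
    {a : Matrix (Fin p) (Fin p) V} (ha : a ∈ D p) (M₀ : Matrix (Fin 0) (Fin 0) V) :
    M₀ ∈ D 0 := by
  have h : Matrix.reindex (Equiv.sumEmpty (Fin p) (Fin 0)) (Equiv.sumEmpty (Fin p) (Fin 0))
      (Matrix.fromBlocks a 0 0 M₀) = a := by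
    ext i j
    simp
  have hblk : blkV a 0 M₀ ∈ D (p + 0) := by
    rwa [blkV, huni.reindex_mem_iff finSumFinEquiv (Equiv.sumEmpty (Fin p) (Fin 0)), h]
  exact (hconv _ _ hblk).2

lemma blkDiagV_mem_iff (hds : RespectsDirectSums D) (huni : UnitaryInvariant D)
    (hconv : ConverseDirectSums D) (hD₀ : ∀ M₀ : Matrix (Fin 0) (Fin 0) V, M₀ ∈ D 0)
    {r : ℕ} : ∀ {k : ℕ} (f : Fin k → Matrix (Fin r) (Fin r) V),
      blkDiagV f ∈ D (k * r) ↔ ∀ p, f p ∈ D r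
  | 0, f => by
    simp only [IsEmpty.forall_iff, iff_true]
    rw [blkDiagV, huni.reindex_mem_iff _ (Equiv.equivOfIsEmpty (Fin r × Fin 0) (Fin 0))]
    exact hD₀ _
  | k + 1, f => by
    let e := Equiv.sumCongr (Equiv.refl (Fin r))
      ((Equiv.prodComm (Fin r) (Fin k)).trans finProdFinEquiv)
    have hsplit : blkDiagV f ∈ D ((k + 1) * r) ↔
        blkV (f 0) 0 (blkDiagV fun p => f p.succ) ∈ D (r + k * r) := by
      have h : blkV (f 0) 0 (blkDiagV fun p => f p.succ) =
          Matrix.reindex (e.trans finSumFinEquiv) (e.trans finSumFinEquiv)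
            (Matrix.fromBlocks (f 0) 0 0 (Matrix.blockDiagonal fun p => f p.succ)) := by
        ext i j
        obtain ⟨u, rfl⟩ := finSumFinEquiv.surjective i
        obtain ⟨v, rfl⟩ := finSumFinEquiv.surjective j
        rcases u with x | w <;> rcases v with y | w' <;> simp [e, blkV, blkDiagV]
      rw [h, ← Matrix.reindex_blockDiagonal_fin_succ, ← Equiv.trans_apply, Matrix.reindex_trans,
        blkDiagV, huni.reindex_mem_iff]
    rw [hsplit, Fin.forall_fin_succ, ← blkDiagV_mem_iff hds huni hconv hD₀]
    exact ⟨hconv _ _, fun h => hds _ _ h.1 h.2⟩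

end DirectSums

section Amplification

variable {D : ∀ n, Set (Matrix (Fin n) (Fin n) V)} {k n m : ℕ}

lemma UnitaryInvariant.blkV_kronV_mem_iff_conj (huni : UnitaryInvariant D)
    (a : Matrix (Fin n) (Fin n) V) (b : Matrix (Fin n) (Fin m) V) (c : Matrix (Fin m) (Fin m) V)
    {U W : Matrix (Fin k) (Fin k) ℂ} (hU : U ∈ Matrix.unitaryGroup (Fin k) ℂ)
    (hW : W ∈ Matrix.unitaryGroup (Fin k) ℂ) (Y : Matrix (Fin k) (Fin k) ℂ) :
    blkV (kronV 1 a) (kronV (Uᴴ * Y * W) b) (kronV 1 c) ∈ D (k * n + k * m) ↔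
      blkV (kronV 1 a) (kronV Y b) (kronV 1 c) ∈ D (k * n + k * m) := by
  have hUU : Uᴴ * U = 1 := Matrix.mem_unitaryGroup_iff'.mp hU
  have hWW : Wᴴ * W = 1 := Matrix.mem_unitaryGroup_iff'.mp hW
  have hG := blkV_mem_unitaryGroup (m := k * m)
    (kronV_one_mem_unitaryGroup (n := n) (Unitary.star_mem hU))
    (kronV_one_mem_unitaryGroup (n := m) (Unitary.star_mem hW))
  rw [← huni.conj_mem_iff hG (blkV (kronV 1 a) (kronV Y b) (kronV 1 c))]
  simp only [Matrix.star_eq_conjTranspose, blkV_conjTranspose, kronV_conjTranspose,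
    Matrix.conjTranspose_conjTranspose, Matrix.conjTranspose_one, scalarMulR_blkV,
    scalarMulR_kronV, scalarMulL_blkV, scalarMulL_kronV, hUU, hWW, ← mul_assoc, mul_one]

lemma blkV_kronV_diagonal_mem_iff (hds : RespectsDirectSums D) (huni : UnitaryInvariant D)
    (hconv : ConverseDirectSums D) (hD₀ : ∀ M₀ : Matrix (Fin 0) (Fin 0) V, M₀ ∈ D 0)
    (a : Matrix (Fin n) (Fin n) V) (b : Matrix (Fin n) (Fin m) V) (c : Matrix (Fin m) (Fin m) V)
    (d : Fin k → ℂ) :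
    blkV (kronV 1 a) (kronV (Matrix.diagonal d) b) (kronV 1 c) ∈ D (k * n + k * m) ↔
      ∀ p, blkV a (d p • b) c ∈ D (n + m) := by
  let core : Matrix (Fin k × (Fin n ⊕ Fin m)) (Fin k × (Fin n ⊕ Fin m)) V :=
    Matrix.of fun i j => if i.1 = j.1 then Matrix.fromBlocks a (d i.1 • b) 0 c i.2 j.2 else 0
  let E := (Equiv.prodSumDistrib (Fin k) (Fin n) (Fin m)).trans
    ((Equiv.sumCongr finProdFinEquiv finProdFinEquiv).trans finSumFinEquiv)
  let E' : Fin k × (Fin n ⊕ Fin m) ≃ Fin (k * (n + m)) :=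
    (Equiv.prodCongr (Equiv.refl (Fin k)) finSumFinEquiv).trans finProdFinEquiv
  have hE : blkV (kronV 1 a) (kronV (Matrix.diagonal d) b) (kronV 1 c) =
      Matrix.reindex E E core := by
    ext i j
    obtain ⟨u, rfl⟩ := finSumFinEquiv.surjective i
    obtain ⟨v, rfl⟩ := finSumFinEquiv.surjective j
    rw [blkV_apply]
    rcases u with u | u <;> obtain ⟨⟨p, x⟩, rfl⟩ := finProdFinEquiv.surjective u <;>
      rcases v with v | v <;> obtain ⟨⟨q, y⟩, rfl⟩ := finProdFinEquiv.surjective v <;>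
      by_cases h : p = q <;> simp [E, core, kronV_apply, h]
  have hE' : blkDiagV (fun p => blkV a (d p • b) c) = Matrix.reindex E' E' core := by
    ext i j
    obtain ⟨⟨p, x⟩, rfl⟩ := finProdFinEquiv.surjective i
    obtain ⟨⟨q, y⟩, rfl⟩ := finProdFinEquiv.surjective j
    obtain ⟨u, rfl⟩ := finSumFinEquiv.surjective x
    obtain ⟨v, rfl⟩ := finSumFinEquiv.surjective y
    by_cases h : p = q
    · subst h
      simp [E', core, blkDiagV_apply, blkV_apply]
    · simp [E', core, blkDiagV_apply, h]
  rw [← blkDiagV_mem_iff hds huni hconv hD₀, hE, hE', huni.reindex_mem_iff]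

lemma blkV_kronV_unitary_diagonal_mem_iff (hds : RespectsDirectSums D)
    (huni : UnitaryInvariant D) (hconv : ConverseDirectSums D)
    (hD₀ : ∀ M₀ : Matrix (Fin 0) (Fin 0) V, M₀ ∈ D 0)
    (a : Matrix (Fin n) (Fin n) V) (b : Matrix (Fin n) (Fin m) V) (c : Matrix (Fin m) (Fin m) V)
    {U W : Matrix (Fin k) (Fin k) ℂ} (hU : U ∈ Matrix.unitaryGroup (Fin k) ℂ)
    (hW : W ∈ Matrix.unitaryGroup (Fin k) ℂ) (d : Fin k → ℂ) :
    blkV (kronV 1 a) (kronV (U * Matrix.diagonal d * Wᴴ) b) (kronV 1 c) ∈ D (k * n + k * m) ↔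
      ∀ p, blkV a (d p • b) c ∈ D (n + m) := by
  have hUU : Uᴴ * U = 1 := Matrix.mem_unitaryGroup_iff'.mp hU
  have hWW : Wᴴ * W = 1 := Matrix.mem_unitaryGroup_iff'.mp hW
  have hcancel : Uᴴ * (U * Matrix.diagonal d * Wᴴ) * W = Matrix.diagonal d := by
    simp only [← Matrix.mul_assoc, hUU, Matrix.one_mul]
    rw [Matrix.mul_assoc, hWW, Matrix.mul_one]
  rw [← huni.blkV_kronV_mem_iff_conj a b c hU hW, hcancel,
    blkV_kronV_diagonal_mem_iff hds huni hconv hD₀]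

end Amplification

noncomputable def admissibleRadius (P : ℝ → Prop) : ℝ≥0∞ :=
  sSup {t : ℝ≥0∞ | ∀ s : ℝ, 0 ≤ s → ENNReal.ofReal s ≤ t → P s}

lemma ncDelta_eq_inv_admissibleRadius (D : ∀ n, Set (Matrix (Fin n) (Fin n) V)) {n m : ℕ}
    (a : Matrix (Fin n) (Fin n) V) (c : Matrix (Fin m) (Fin m) V) (b : Matrix (Fin n) (Fin m) V) :
    ncDelta D a c b = (admissibleRadius fun s => blkV a ((s : ℂ) • b) c ∈ D (n + m))⁻¹ :=
  rfl

lemma admissibleRadius_forall_mul {ι : Type*} (P : ℝ → Prop) {σ : ι → ℝ} (hσ : ∀ i, 0 ≤ σ i)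
    {i₀ : ι} (hi₀ : ∀ i, σ i ≤ σ i₀) (hpos : 0 < σ i₀) :
    admissibleRadius (fun s => ∀ i, P (s * σ i)) = admissibleRadius P / ENNReal.ofReal (σ i₀) := by
  have hr₀ : ENNReal.ofReal (σ i₀) ≠ 0 := by simpa using hpos
  rw [admissibleRadius, admissibleRadius, ← ENNReal.sSup_setOf_mul_mem hr₀ ENNReal.ofReal_ne_top]
  congr 1
  ext t
  simp only [Set.mem_ofPred_eq]
  constructor
  · intro h s hs hst
    have hs' : 0 ≤ s / σ i₀ := div_nonneg hs hpos.le
    have := h (s / σ i₀) hs' (by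
      rwa [ENNReal.ofReal_div_of_pos hpos, ENNReal.div_le_iff_le_mul (Or.inl hr₀)
        (Or.inl ENNReal.ofReal_ne_top)])
    simpa [div_mul_cancel₀ s hpos.ne'] using this i₀
  · intro h s hs hst i
    refine h _ (mul_nonneg hs (hσ i)) ?_
    rw [ENNReal.ofReal_mul hs]
    exact mul_le_mul' hst (ENNReal.ofReal_le_ofReal (hi₀ i))

lemma inv_admissibleRadius_forall_mul {ι : Type*} [Fintype ι] {P : ℝ → Prop} (hP : P 0)
    {σ : ι → ℝ} (hσ : ∀ i, 0 ≤ σ i) :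
    (admissibleRadius fun s => ∀ i, P (s * σ i))⁻¹ =
      (admissibleRadius P)⁻¹ * ENNReal.ofReal ‖σ‖ := by
  rcases (norm_nonneg σ).eq_or_lt with h₀ | hpos
  · have hσ₀ : ∀ i, σ i = 0 := fun i =>
      le_antisymm ((Real.le_norm_self _).trans (h₀ ▸ norm_le_pi_norm σ i)) (hσ i)
    have htop : admissibleRadius (fun s => ∀ i, P (s * σ i)) = ⊤ :=
      top_unique <| le_sSup fun s _ _ i => by simpa [hσ₀ i] using hP
    simp [htop, ← h₀]
  · have : Nonempty ι := by
      by_contra hι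
      rw [not_nonempty_iff] at hι
      exact hpos.ne' (by simp [Subsingleton.elim σ 0])
    obtain ⟨⟨i₀, hi₀⟩, hmax⟩ := IsGreatest.pi_norm σ
    simp only [Real.norm_of_nonneg (hσ _)] at hi₀ hmax
    rw [← hi₀, admissibleRadius_forall_mul P hσ (fun i => hi₀ ▸ hmax ⟨i, rfl⟩) (hi₀ ▸ hpos),
      ENNReal.inv_div (Or.inl ENNReal.ofReal_ne_top) (Or.inl (by simpa [hi₀] using hpos)),
      div_eq_mul_inv, mul_comm]

theorem stmt_8 (D : ∀ n, Set (Matrix (Fin n) (Fin n) V))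
    (hds : RespectsDirectSums D) (huni : UnitaryInvariant D) (hconv : ConverseDirectSums D)
    {n m k : ℕ} (a : Matrix (Fin n) (Fin n) V) (c : Matrix (Fin m) (Fin m) V)
    (b : Matrix (Fin n) (Fin m) V) (ha : a ∈ D n) (hc : c ∈ D m)
    (Z : Matrix (Fin k) (Fin k) ℂ) :
    ncDelta D (kronV 1 a) (kronV 1 c) (kronV Z b)
      = ncDelta D a c b *
          ENNReal.ofReal (Real.sqrt ‖Matrix.toEuclideanCLM (𝕜 := ℂ) (Z * Zᴴ)‖) := by
  obtain ⟨U, hU, W, hW, σ, hσ, rfl⟩ := Matrix.exists_svd Z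
  have hmem : ∀ s : ℝ,
      blkV (kronV 1 a) ((s : ℂ) • kronV (U * Matrix.diagonal (fun p => (σ p : ℂ)) * Wᴴ) b)
        (kronV 1 c) ∈ D (k * n + k * m) ↔ ∀ p, blkV a (((s * σ p : ℝ) : ℂ) • b) c ∈ D (n + m) := by
    intro s
    rw [smul_kronV, ← Matrix.smul_mul, ← Matrix.mul_smul, ← Matrix.diagonal_smul,
      blkV_kronV_unitary_diagonal_mem_iff hds huni hconv (mem_zero_of_mem huni hconv ha) a b c
        hU hW]
    simp only [Pi.smul_apply, smul_eq_mul, Complex.ofReal_mul]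
  have hnorm : ‖fun p => (σ p : ℂ)‖ = ‖σ‖ := by simp [Pi.norm_def]
  rw [Matrix.sqrt_norm_toEuclideanCLM_mul_conjTranspose,
    Matrix.l2_opNorm_unitary_mul_diagonal_mul hU hW, hnorm,
    ncDelta_eq_inv_admissibleRadius, ncDelta_eq_inv_admissibleRadius,
    ← inv_admissibleRadius_forall_mul (by simpa using hds a c ha hc) hσ]
  simp only [hmem]
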